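/- arXiv:2504.04049 — 5 statements merged into one kernel-verified Lean document; each statement's English description precedes it below -/
import Mathlib

section
/- Let (d_{n,k}) = (g; f_1,…,f_ℓ) be a multiple Riordan array and let h be an ℓ-th root of f_1⋯f_ℓ. Fix m with 0 ≤ m ≤ ℓ−1 and suppose Q ∈ K[[t]] satisfies Q·h^m = f_1⋯f_m (empty product equal to 1, so Q = 1 when m = 0). Then for every sequence (a_k)_{k≥0} in K and every n ≥ 0, Σ_{k≥0, ℓk+m≤n} d_{n, ℓk+m}·a_k = [t^n]( g·Q·A(h) ), where A = Σ_{k≥0} a_k t^{ℓk+m} (first fundamental theorem of multiple Riordan arrays). -/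
open PowerSeries Finset

/-- Formal substitution `F(u)`: for `u` with zero constant term, the `n`-th coefficient of
`F(u)` is `∑_{k ≤ n} F_k · [t^n] u^k`. -/
noncomputable def psComp {K : Type*} [CommRing K] (F u : K⟦X⟧) : K⟦X⟧ :=
  PowerSeries.mk fun n => ∑ k ∈ Finset.range (n + 1), coeff k F * coeff n (u ^ k)

/-- Entry `d_{n,k}` of the multiple Riordan array `(g; f_0, …, f_{ℓ-1})`: the `k`-th column,
`k = qℓ + m`, has generating function `g · f_0⋯f_{m-1} · (f_0⋯f_{ℓ-1})^q`. -/
noncomputable def mrEntry {K : Type*} [CommRing K] (ℓ : ℕ) (g : K⟦X⟧) (f : ℕ → K⟦X⟧)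
    (n k : ℕ) : K :=
  coeff n (g * (∏ i ∈ Finset.range (k % ℓ), f i) * (∏ i ∈ Finset.range ℓ, f i) ^ (k / ℓ))

/-!
The column of index `ℓk + m` of `(g; f_0, …, f_{ℓ-1})` has generating function
`g · f_0⋯f_{m-1} · (h^ℓ)^k = g · Q · h^(ℓk+m)`, so the array acts on a sequence exactly as the
ordinary Riordan array `(g·Q, h)` acts on the sequence of coefficients of `A`, which is
supported on the indices `≡ m (mod ℓ)`. For an ordinary Riordan array the fundamental theorem
is the linearity of `coeff n (G · ·)` in `F(u) = ∑ F_j u^j`, where only `j ≤ n` contributes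
because `u^j` has order at least `j`.
-/

section Substitution

variable {R : Type*} [CommRing R]

theorem coeff_pow_eq_zero_of_lt {u : R⟦X⟧} (hu : constantCoeff u = 0) {q j : ℕ} (hq : q < j) :
    coeff q (u ^ j) = 0 :=
  X_pow_dvd_iff.mp (pow_dvd_pow_of_dvd (X_dvd_iff.mpr hu) j) q hq

theorem coeff_psComp_eq_sum_range {u : R⟦X⟧} (hu : constantCoeff u = 0) (F : R⟦X⟧)
    {q N : ℕ} (hq : q ≤ N) :
    coeff q (psComp F u) = ∑ j ∈ range (N + 1), coeff j F * coeff q (u ^ j) := by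
  rw [psComp, coeff_mk]
  refine sum_subset (range_subset_range.mpr (by omega)) fun j _ hj => ?_
  rw [coeff_pow_eq_zero_of_lt hu (by simpa using hj), mul_zero]

theorem coeff_mul_psComp {u : R⟦X⟧} (hu : constantCoeff u = 0) (G F : R⟦X⟧) (n : ℕ) :
    coeff n (G * psComp F u) = ∑ j ∈ range (n + 1), coeff j F * coeff n (G * u ^ j) := by
  calc coeff n (G * psComp F u)
      = ∑ p ∈ antidiagonal n, ∑ j ∈ range (n + 1),
          coeff j F * (coeff p.1 G * coeff p.2 (u ^ j)) := by
        rw [coeff_mul]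
        refine sum_congr rfl fun p hp => ?_
        rw [coeff_psComp_eq_sum_range hu F (HasAntidiagonal.antidiagonal.snd_le hp), mul_sum]
        exact sum_congr rfl fun j _ => mul_left_comm _ _ _
    _ = ∑ j ∈ range (n + 1), coeff j F * coeff n (G * u ^ j) := by
        rw [sum_comm]
        simp only [← mul_sum, coeff_mul]

end Substitution

theorem sum_filter_mod_eq_sum_filter_mul_add {M : Type*} [AddCommMonoid M] {ℓ m : ℕ}
    (hm : m < ℓ) (n : ℕ) (F : ℕ → M) :
    ∑ j ∈ range (n + 1) with j % ℓ = m, F j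
      = ∑ k ∈ range (n + 1) with ℓ * k + m ≤ n, F (ℓ * k + m) := by
  symm
  refine sum_nbij' (ℓ * · + m) (· / ℓ) ?_ ?_ ?_ ?_ fun _ _ => rfl
  all_goals intro j hj
  all_goals simp only [mem_filter, mem_range] at hj ⊢
  · exact ⟨by omega, by rw [Nat.mul_add_mod, Nat.mod_eq_of_lt hm]⟩
  · have := Nat.div_add_mod j ℓ
    have := Nat.div_le_self j ℓ
    omega
  · rw [Nat.mul_add_div (by omega), Nat.div_eq_of_lt hm, add_zero]
  · have := Nat.div_add_mod j ℓ
    omega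

theorem mrEntry_mul_add {R : Type*} [CommRing R] {ℓ m : ℕ} (hm : m < ℓ) (g : R⟦X⟧)
    (f : ℕ → R⟦X⟧) (n k : ℕ) :
    mrEntry ℓ g f n (ℓ * k + m)
      = coeff n (g * (∏ i ∈ range m, f i) * (∏ i ∈ range ℓ, f i) ^ k) := by
  rw [mrEntry, Nat.mul_add_mod, Nat.mod_eq_of_lt hm, Nat.mul_add_div (by omega),
    Nat.div_eq_of_lt hm, add_zero]

theorem stmt0_general {K : Type*} [Field K] (ℓ : ℕ)
    (g : K⟦X⟧) (f : ℕ → K⟦X⟧)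
    (h : K⟦X⟧) (hhs : ∀ n, n % ℓ ≠ 1 → coeff n h = 0)
    (hhl : h ^ ℓ = ∏ i ∈ Finset.range ℓ, f i)
    (m : ℕ) (hm : m < ℓ)
    (Q : K⟦X⟧) (hQ : Q * h ^ m = ∏ i ∈ Finset.range m, f i)
    (a : ℕ → K)
    (A : K⟦X⟧) (hA : A = PowerSeries.mk fun n => if n % ℓ = m then a ((n - m) / ℓ) else 0)
    (d : ℕ → ℕ → K) (hd : ∀ n k, d n k = mrEntry ℓ g f n k) :
    ∀ n, ∑ k ∈ Finset.filter (fun k => ℓ * k + m ≤ n) (Finset.range (n + 1)),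
        d n (ℓ * k + m) * a k
      = coeff n (g * Q * psComp A h) := by
  intro n
  have hh0 : constantCoeff h = 0 := by
    simpa using hhs 0 (by rw [Nat.zero_mod]; exact zero_ne_one)
  have hcolumn : ∀ k, d n (ℓ * k + m) = coeff n (g * Q * h ^ (ℓ * k + m)) := fun k => by
    rw [hd, mrEntry_mul_add hm, ← hQ, ← hhl, ← pow_mul, pow_add]
    ring_nf
  rw [coeff_mul_psComp hh0, hA]
  simp only [coeff_mk, ite_mul, zero_mul, ← sum_filter]
  rw [sum_filter_mod_eq_sum_filter_mul_add hm]
  refine sum_congr rfl fun k _ => ?_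
  rw [hcolumn, Nat.add_sub_cancel, Nat.mul_div_cancel_left _ (by omega), mul_comm]

/-- First fundamental theorem of multiple Riordan arrays. -/
theorem stmt0 {K : Type*} [Field K] [CharZero K] (ℓ : ℕ) (hℓ : 2 ≤ ℓ)
    (g : K⟦X⟧) (f : ℕ → K⟦X⟧)
    (hg : ∀ n, ¬ (ℓ ∣ n) → coeff n g = 0) (hg0 : constantCoeff g ≠ 0)
    (hf : ∀ i < ℓ, ∀ n, n % ℓ ≠ 1 → coeff n (f i) = 0)
    (hf1 : ∀ i < ℓ, coeff 1 (f i) ≠ 0)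
    (h : K⟦X⟧) (hhs : ∀ n, n % ℓ ≠ 1 → coeff n h = 0) (hh1 : coeff 1 h ≠ 0)
    (hhl : h ^ ℓ = ∏ i ∈ Finset.range ℓ, f i)
    (m : ℕ) (hm : m < ℓ)
    (Q : K⟦X⟧) (hQ : Q * h ^ m = ∏ i ∈ Finset.range m, f i)
    (a : ℕ → K)
    (A : K⟦X⟧) (hA : A = PowerSeries.mk fun n => if n % ℓ = m then a ((n - m) / ℓ) else 0)
    (d : ℕ → ℕ → K) (hd : ∀ n k, d n k = mrEntry ℓ g f n k) :
    ∀ n, ∑ k ∈ Finset.filter (fun k => ℓ * k + m ≤ n) (Finset.range (n + 1)),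
        d n (ℓ * k + m) * a k
      = coeff n (g * Q * psComp A h) :=
  stmt0_general ℓ g f h hhs hhl m hm Q hQ a A hA d hd
end

section
/- Let D = (d_{n,k}) = (g; f_1,…,f_ℓ) be a multiple Riordan array, h an ℓ-th root of f_1⋯f_ℓ, and let h̄ ∈ K[[t]] with h̄(0) = 0 be the compositional inverse of h (h(h̄) = t and h̄(h) = t). Suppose u_i ∈ K[[t]] satisfy u_i·f_i(h̄) = t·h̄ for i = 1,…,ℓ. Then g(h̄) has nonzero constant term, g(h̄)^{−1} = Σ c_k t^{ℓk} with c_0 ≠ 0, each u_i = Σ u_{i,k} t^{ℓk+1} with u_{i,0} ≠ 0, and the multiple Riordan array E = (e_{n,k}) = ( g(h̄)^{−1}; u_1,…,u_ℓ ) is a two-sided matrix inverse of D: Σ_{j=0}^{n} d_{n,j} e_{j,k} = δ_{n,k} and Σ_{j=0}^{n} e_{n,j} d_{j,k} = δ_{n,k} for all n, k ≥ 0. -/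
open PowerSeries Finset

/-!
Write `f_i(h̄) = t·c_i` with `c_i(0) ≠ 0`. Then `u_i = h̄·c_i⁻¹`, `∏ c_i = 1` because
`∏ f_i(h̄) = h(h̄)^ℓ = t^ℓ`, and `f_i = h·c_i(h)`. So on the rows `j ≡ k (mod ℓ)` column `j` of `D`
is `g·∏_{i<m} c_i(h)·h^j`, where `m = k mod ℓ`. Column `k` of `E` lives on those rows only, so by
the fundamental theorem of Riordan arrays column `k` of `DE` is `g·∏_{i<m} c_i(h)·E_k(h)`, which
is `t^k` because `g·g(h̄)⁻¹(h) = 1` and `c_i(h)·u_i(h) = h̄(h) = t`. The product `ED` is the same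
computation with `(g, f, h)` and `(g(h̄)⁻¹, u, h̄)` exchanged and `c_i` replaced by `c_i⁻¹`.
-/

namespace PowerSeries

section Substitution

variable {R : Type*} [CommRing R] {u H : R⟦X⟧}

theorem coeff_pow_eq_zero_of_lt (hu : constantCoeff u = 0) {n k : ℕ} (h : n < k) :
    coeff n (u ^ k) = 0 := by
  obtain ⟨w, rfl⟩ := X_dvd_iff.2 hu
  rw [mul_pow, coeff_X_pow_mul', if_neg (not_le.2 h)]

theorem coeff_pow_self (hu : constantCoeff u = 0) (n : ℕ) : coeff n (u ^ n) = coeff 1 u ^ n := by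
  obtain ⟨w, rfl⟩ := X_dvd_iff.2 hu
  simpa [mul_pow] using coeff_X_pow_mul (w ^ n) n 0

theorem coeff_subst_eq_sum_range (hu : constantCoeff u = 0) (F : R⟦X⟧) {n N : ℕ} (hn : n < N) :
    coeff n (subst u F) = ∑ d ∈ range N, coeff d F * coeff n (u ^ d) := by
  rw [coeff_subst' (HasSubst.of_constantCoeff_zero' hu)]
  refine finsum_eq_sum_of_support_subset _ fun d hd => ?_
  rw [coe_range, Set.mem_Iio]
  by_contra! hNd
  exact hd (by simp only [smul_eq_mul, coeff_pow_eq_zero_of_lt hu (by omega : n < d), mul_zero])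

theorem psComp_eq_subst (hu : constantCoeff u = 0) (F : R⟦X⟧) : psComp F u = subst u F := by
  ext n
  rw [coeff_subst_eq_sum_range hu F n.lt_succ_self, psComp, coeff_mk]

theorem constantCoeff_subst_of_constantCoeff_eq_zero (hu : constantCoeff u = 0) (F : R⟦X⟧) :
    constantCoeff (subst u F) = constantCoeff F := by
  simpa using coeff_subst_eq_sum_range hu F (n := 0) one_pos

theorem coeff_one_subst (hu : constantCoeff u = 0) (F : R⟦X⟧) :
    coeff 1 (subst u F) = coeff 1 F * coeff 1 u := by
  simp [coeff_subst_eq_sum_range hu F (show 1 < 2 by norm_num), sum_range_succ]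

theorem subst_one (hu : constantCoeff u = 0) : subst u (1 : R⟦X⟧) = 1 := by
  rw [← coe_substAlgHom (HasSubst.of_constantCoeff_zero' hu), map_one]

theorem subst_prod (hu : constantCoeff u = 0) {ι : Type*} (s : Finset ι) (F : ι → R⟦X⟧) :
    subst u (∏ i ∈ s, F i) = ∏ i ∈ s, subst u (F i) := by
  simp only [← coe_substAlgHom (HasSubst.of_constantCoeff_zero' hu), map_prod]

theorem subst_subst_of_subst_eq_X {h' : R⟦X⟧} (hu : constantCoeff u = 0)
    (hh' : constantCoeff h' = 0) (hinv : subst u h' = X) (F : R⟦X⟧) :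
    subst u (subst h' F) = F := by
  rw [subst_comp_subst_apply (.of_constantCoeff_zero' hh') (.of_constantCoeff_zero' hu), hinv,
    X_subst]

/-- The fundamental theorem of Riordan arrays. -/
theorem sum_coeff_mul_pow_mul_coeff (hH : constantCoeff H = 0) (A C : R⟦X⟧) (n : ℕ) :
    ∑ j ∈ range (n + 1), coeff n (A * H ^ j) * coeff j C = coeff n (A * subst H C) := by
  simp only [coeff_mul, sum_mul]
  rw [sum_comm]
  refine sum_congr rfl fun p hp => ?_
  rw [coeff_subst_eq_sum_range hH C (N := n + 1) (by have := mem_antidiagonal.1 hp; omega),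
    mul_sum]
  exact sum_congr rfl fun j _ => by ring

end Substitution

def SupportedMod {R : Type*} [Semiring R] (ℓ r : ℕ) (F : R⟦X⟧) : Prop :=
  ∀ n, ¬ n ≡ r [MOD ℓ] → coeff n F = 0

theorem supportedMod_zero_iff {R : Type*} [Semiring R] {ℓ : ℕ} {F : R⟦X⟧} :
    SupportedMod ℓ 0 F ↔ ∀ n, ¬ ℓ ∣ n → coeff n F = 0 := by
  simp only [SupportedMod, Nat.modEq_zero_iff_dvd]

theorem supportedMod_one_iff {R : Type*} [Semiring R] {ℓ : ℕ} (hℓ : 2 ≤ ℓ) {F : R⟦X⟧} :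
    SupportedMod ℓ 1 F ↔ ∀ n, n % ℓ ≠ 1 → coeff n F = 0 := by
  simp only [SupportedMod, Nat.ModEq, Nat.mod_eq_of_lt (show 1 < ℓ by omega)]

namespace SupportedMod

variable {R : Type*} {ℓ r s : ℕ}

theorem constantCoeff_eq_zero [Semiring R] {F : R⟦X⟧} (hF : SupportedMod ℓ 1 F) (hℓ : ℓ ≠ 1) :
    constantCoeff F = 0 := by
  simpa using hF 0 (by simp [Nat.ModEq, Nat.one_mod_eq_one.2 hℓ])

theorem of_modEq [Semiring R] {F : R⟦X⟧} (hF : SupportedMod ℓ r F) (h : r ≡ s [MOD ℓ]) :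
    SupportedMod ℓ s F :=
  fun n hn => hF n fun hr => hn (hr.trans h)

theorem of_X_mul [Semiring R] {F : R⟦X⟧} (hF : SupportedMod ℓ (r + 1) (X * F)) :
    SupportedMod ℓ r F := fun n hn => by
  simpa using hF (n + 1) fun h => hn (Nat.ModEq.add_right_cancel' 1 h)

theorem mul [Semiring R] {F G : R⟦X⟧} (hF : SupportedMod ℓ r F) (hG : SupportedMod ℓ s G) :
    SupportedMod ℓ (r + s) (F * G) := by
  intro n hn
  rw [coeff_mul]
  refine sum_eq_zero fun p hp => ?_
  by_cases h1 : p.1 ≡ r [MOD ℓ]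
  · rw [hG p.2 fun h2 => hn (mem_antidiagonal.1 hp ▸ h1.add h2), mul_zero]
  · rw [hF p.1 h1, zero_mul]

theorem prod [CommSemiring R] {ι : Type*} {t : Finset ι} {r : ι → ℕ} {F : ι → R⟦X⟧}
    (hF : ∀ i ∈ t, SupportedMod ℓ (r i) (F i)) :
    SupportedMod ℓ (∑ i ∈ t, r i) (∏ i ∈ t, F i) := by
  induction t using Finset.cons_induction with
  | empty =>
    intro n hn
    rw [prod_empty, coeff_one, if_neg]
    rintro rfl
    exact hn rfl
  | cons i t hi ih =>
    rw [sum_cons, prod_cons]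
    exact (hF i (mem_cons_self i t)).mul (ih fun j hj => hF j (mem_cons_of_mem hj))

theorem pow [CommSemiring R] {F : R⟦X⟧} (hF : SupportedMod ℓ r F) (k : ℕ) :
    SupportedMod ℓ (k * r) (F ^ k) := by
  simpa using prod (t := range k) fun _ _ => hF

theorem subst [CommRing R] {F u : R⟦X⟧} (hF : SupportedMod ℓ r F) (hu : SupportedMod ℓ 1 u)
    (hu0 : constantCoeff u = 0) : SupportedMod ℓ r (PowerSeries.subst u F) := by
  intro n hn
  rw [coeff_subst_eq_sum_range hu0 F n.lt_succ_self]
  refine sum_eq_zero fun d _ => ?_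
  by_cases hd : d ≡ r [MOD ℓ]
  · rw [hu.pow d n fun h => hn (h.trans (by rwa [mul_one])), mul_zero]
  · rw [hF d hd, zero_mul]

theorem of_subst_eq_X [CommRing R] [IsDomain R] {h h' : R⟦X⟧} (hh : SupportedMod ℓ 1 h)
    (hh0 : constantCoeff h = 0) (hh1 : coeff 1 h ≠ 0) (hinv : PowerSeries.subst h h' = X) :
    SupportedMod ℓ 1 h' := by
  intro n
  induction n using Nat.strong_induction_on with
  | _ n ih =>
  intro hn
  have hX : coeff n (PowerSeries.subst h h') = 0 := by
    rw [hinv, coeff_X, if_neg]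
    rintro rfl
    exact hn rfl
  rw [coeff_subst_eq_sum_range hh0 h' n.lt_succ_self, sum_range_succ, sum_eq_zero, zero_add,
    coeff_pow_self hh0] at hX
  · exact (mul_eq_zero.1 hX).resolve_right (pow_ne_zero n hh1)
  · intro d hd
    by_cases hd1 : d ≡ 1 [MOD ℓ]
    · rw [hh.pow d n fun h => hn (h.trans (by rwa [mul_one])), mul_zero]
    · rw [ih d (mem_range.1 hd) hd1, zero_mul]

theorem inv {K : Type*} [Field K] {F : K⟦X⟧} (hF : SupportedMod ℓ 0 F) :
    SupportedMod ℓ 0 F⁻¹ := by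
  intro n
  induction n using Nat.strong_induction_on with
  | _ n ih =>
  intro hn
  rw [coeff_inv, if_neg fun (h0 : n = 0) => hn (h0 ▸ rfl)]
  refine mul_eq_zero_of_right _ (sum_eq_zero fun p hp => ?_)
  split_ifs with hlt
  · by_cases h1 : p.1 ≡ 0 [MOD ℓ]
    · rw [ih p.2 hlt fun h2 => hn (mem_antidiagonal.1 hp ▸ h1.add h2), mul_zero]
    · rw [hF p.1 h1, zero_mul]
  · rfl

end SupportedMod

section MultipleRiordan

variable {R : Type*} [CommRing R] {ℓ : ℕ}

noncomputable def mrColumn (ℓ : ℕ) (g : R⟦X⟧) (f : ℕ → R⟦X⟧) (k : ℕ) : R⟦X⟧ :=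
  g * (∏ i ∈ range (k % ℓ), f i) * (∏ i ∈ range ℓ, f i) ^ (k / ℓ)

theorem mrEntry_eq_coeff_mrColumn (ℓ : ℕ) (g : R⟦X⟧) (f : ℕ → R⟦X⟧) (n k : ℕ) :
    mrEntry ℓ g f n k = coeff n (mrColumn ℓ g f k) :=
  rfl

theorem supportedMod_mrColumn (hℓ : 0 < ℓ) {g : R⟦X⟧} {f : ℕ → R⟦X⟧}
    (hg : SupportedMod ℓ 0 g) (hf : ∀ i < ℓ, SupportedMod ℓ 1 (f i)) (k : ℕ) :
    SupportedMod ℓ k (mrColumn ℓ g f k) := by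
  have hprod : ∀ m ≤ ℓ, SupportedMod ℓ m (∏ i ∈ range m, f i) := fun m hm => by
    simpa using SupportedMod.prod (t := range m) fun i hi => hf i (by have := mem_range.1 hi; omega)
  refine ((hg.mul (hprod _ (Nat.mod_lt k hℓ).le)).mul ((hprod ℓ le_rfl).pow _)).of_modEq ?_
  rw [zero_add, mul_comm, Nat.mod_add_div]

theorem mrColumn_eq_mul_pow (hℓ : 0 < ℓ) {h : R⟦X⟧} {f a : ℕ → R⟦X⟧}
    (hfa : ∀ i < ℓ, f i = h * a i) (ha : ∏ i ∈ range ℓ, a i = 1) (g : R⟦X⟧) (k : ℕ) :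
    mrColumn ℓ g f k = g * (∏ i ∈ range (k % ℓ), a i) * h ^ k := by
  have hprod : ∀ m ≤ ℓ, ∏ i ∈ range m, f i = h ^ m * ∏ i ∈ range m, a i := fun m hm => by
    rw [prod_congr rfl fun i hi => hfa i (by have := mem_range.1 hi; omega), prod_mul_distrib,
      prod_const, card_range]
  rw [mrColumn, hprod _ (Nat.mod_lt k hℓ).le, hprod ℓ le_rfl, ha, mul_one, ← pow_mul,
    show h ^ k = h ^ (k % ℓ) * h ^ (ℓ * (k / ℓ)) by rw [← pow_add, Nat.mod_add_div]]
  ring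

theorem subst_mrColumn {H : R⟦X⟧} (hH : constantCoeff H = 0) (g : R⟦X⟧) (f : ℕ → R⟦X⟧)
    (k : ℕ) : subst H (mrColumn ℓ g f k) = mrColumn ℓ (subst H g) (fun i => subst H (f i)) k := by
  simp only [mrColumn, ← coe_substAlgHom (HasSubst.of_constantCoeff_zero' hH), map_mul, map_prod,
    map_pow]

theorem mul_mrColumn_eq_X_pow (hℓ : 0 < ℓ) {g g' : R⟦X⟧} {a v : ℕ → R⟦X⟧} (hgg' : g * g' = 1)
    (hav : ∀ i < ℓ, a i * v i = X) (ha : ∏ i ∈ range ℓ, a i = 1) (k : ℕ) :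
    g * (∏ i ∈ range (k % ℓ), a i) * mrColumn ℓ g' v k = X ^ k := by
  have hprod : ∀ m ≤ ℓ, (∏ i ∈ range m, a i) * ∏ i ∈ range m, v i = X ^ m := fun m hm => by
    rw [← prod_mul_distrib, prod_eq_pow_card fun i hi => hav i (by have := mem_range.1 hi; omega),
      card_range]
  have hv : ∏ i ∈ range ℓ, v i = X ^ ℓ := by simpa [ha] using hprod ℓ le_rfl
  calc g * (∏ i ∈ range (k % ℓ), a i) * mrColumn ℓ g' v k
      = g * g' * ((∏ i ∈ range (k % ℓ), a i) * ∏ i ∈ range (k % ℓ), v i) *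
          (∏ i ∈ range ℓ, v i) ^ (k / ℓ) := by rw [mrColumn]; ring
    _ = X ^ k := by
      rw [hgg', hprod _ (Nat.mod_lt k hℓ).le, hv, one_mul, ← pow_mul, ← pow_add, Nat.mod_add_div]

theorem sum_mrEntry_mul_mrEntry (hℓ : 0 < ℓ) {g g' h : R⟦X⟧} {f a u : ℕ → R⟦X⟧}
    (hh : constantCoeff h = 0) (hfa : ∀ i < ℓ, f i = h * a i) (ha : ∏ i ∈ range ℓ, a i = 1)
    (hg' : SupportedMod ℓ 0 g') (hu : ∀ i < ℓ, SupportedMod ℓ 1 (u i))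
    (hgg' : g * subst h g' = 1) (hau : ∀ i < ℓ, a i * subst h (u i) = X) (n k : ℕ) :
    ∑ j ∈ range (n + 1), mrEntry ℓ g f n j * mrEntry ℓ g' u j k = if n = k then 1 else 0 := by
  have hcol : ∀ j, mrEntry ℓ g f n j * mrEntry ℓ g' u j k =
      coeff n (g * (∏ i ∈ range (k % ℓ), a i) * h ^ j) * coeff j (mrColumn ℓ g' u k) := by
    intro j
    by_cases hjk : j ≡ k [MOD ℓ]
    · rw [mrEntry_eq_coeff_mrColumn, mrColumn_eq_mul_pow hℓ hfa ha, hjk]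
      rfl
    · rw [mrEntry_eq_coeff_mrColumn ℓ g' u, supportedMod_mrColumn hℓ hg' hu k j hjk, mul_zero,
        mul_zero]
  rw [sum_congr rfl fun j _ => hcol j, sum_coeff_mul_pow_mul_coeff hh, subst_mrColumn hh,
    mul_mrColumn_eq_X_pow hℓ hgg' hau ha, coeff_X_pow]

end MultipleRiordan

section Inverse

variable {K : Type*} [Field K] {ℓ : ℕ} {g h hbar : K⟦X⟧} {f u c : ℕ → K⟦X⟧}

/-- If `constantCoeff G = 0`, both sides are the junk value `0` of `⁻¹`. -/
theorem subst_inv {H : K⟦X⟧} (hH : constantCoeff H = 0) (G : K⟦X⟧) :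
    subst H G⁻¹ = (subst H G)⁻¹ := by
  by_cases hG : constantCoeff G = 0
  · rw [inv_eq_zero.2 hG, inv_eq_zero.2 (by rwa [constantCoeff_subst_of_constantCoeff_eq_zero hH]),
      ← coe_substAlgHom (HasSubst.of_constantCoeff_zero' hH), map_zero]
  · rw [eq_inv_iff_mul_eq_one (by rwa [constantCoeff_subst_of_constantCoeff_eq_zero hH]),
      ← subst_mul (.of_constantCoeff_zero' hH), PowerSeries.inv_mul_cancel _ hG, subst_one hH]

theorem exists_subst_eq_X_mul (hbar0 : constantCoeff hbar = 0) (hbar1 : coeff 1 hbar ≠ 0)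
    (hinv : subst hbar h = X) (hhl : h ^ ℓ = ∏ i ∈ range ℓ, f i)
    (hf0 : ∀ i < ℓ, constantCoeff (f i) = 0) (hf1 : ∀ i < ℓ, coeff 1 (f i) ≠ 0)
    (hu : ∀ i < ℓ, u i * subst hbar (f i) = X * hbar) :
    ∃ c : ℕ → K⟦X⟧, (∀ i < ℓ, subst hbar (f i) = X * c i) ∧
      (∀ i < ℓ, constantCoeff (c i) ≠ 0) ∧ (∀ i < ℓ, c i * u i = hbar) ∧
      ∏ i ∈ range ℓ, c i = 1 := by
  set c : ℕ → K⟦X⟧ := fun i => mk fun n => coeff (n + 1) (subst hbar (f i))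
  have hc : ∀ i < ℓ, subst hbar (f i) = X * c i := fun i hi => by
    rw [← sub_const_eq_X_mul_shift, constantCoeff_subst_of_constantCoeff_eq_zero hbar0, hf0 i hi,
      map_zero, sub_zero]
  refine ⟨c, hc, fun i hi => ?_, fun i hi => ?_, X_pow_mul_cancel (k := ℓ) ?_⟩
  · have h1 := coeff_one_subst hbar0 (f i)
    rw [hc i hi, coeff_succ_X_mul] at h1
    rw [← coeff_zero_eq_constantCoeff_apply, h1]
    exact mul_ne_zero (hf1 i hi) hbar1
  · exact mul_left_cancel₀ X_ne_zero (by rw [← hu i hi, hc i hi]; ring)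
  · calc X ^ ℓ * ∏ i ∈ range ℓ, c i = ∏ i ∈ range ℓ, subst hbar (f i) := by
          rw [prod_congr rfl fun i hi => hc i (mem_range.1 hi), prod_mul_distrib, prod_const,
            card_range]
      _ = X ^ ℓ * 1 := by
          rw [← subst_prod hbar0, ← hhl, subst_pow (.of_constantCoeff_zero' hbar0), hinv, mul_one]

theorem sum_mrEntry_mul_mrEntry_subst_inv (hℓ : 0 < ℓ) (hh0 : constantCoeff h = 0)
    (hbar0 : constantCoeff hbar = 0) (hinv : subst h hbar = X) (hg0 : constantCoeff g ≠ 0)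
    (hg : SupportedMod ℓ 0 g) (hbar_supp : SupportedMod ℓ 1 hbar)
    (hu : ∀ i < ℓ, SupportedMod ℓ 1 (u i)) (hc : ∀ i < ℓ, subst hbar (f i) = X * c i)
    (hcu : ∀ i < ℓ, c i * u i = hbar) (hc_prod : ∏ i ∈ range ℓ, c i = 1) (n k : ℕ) :
    ∑ j ∈ range (n + 1), mrEntry ℓ g f n j * mrEntry ℓ (subst hbar g)⁻¹ u j k =
      if n = k then 1 else 0 := by
  have hh : HasSubst h := .of_constantCoeff_zero' hh0
  refine sum_mrEntry_mul_mrEntry hℓ hh0 (a := fun i => subst h (c i)) (fun i hi => ?_) ?_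
    (hg.subst hbar_supp hbar0).inv hu ?_ (fun i hi => ?_) n k
  · rw [← subst_subst_of_subst_eq_X hh0 hbar0 hinv (f i), hc i hi, subst_mul hh, subst_X hh]
  · rw [← subst_prod hh0, hc_prod, subst_one hh0]
  · rw [subst_inv hh0, subst_subst_of_subst_eq_X hh0 hbar0 hinv, PowerSeries.mul_inv_cancel _ hg0]
  · rw [← subst_mul hh, hcu i hi, hinv]

theorem sum_mrEntry_subst_inv_mul_mrEntry (hℓ : 0 < ℓ) (hbar0 : constantCoeff hbar = 0)
    (hg0 : constantCoeff g ≠ 0) (hg : SupportedMod ℓ 0 g) (hf : ∀ i < ℓ, SupportedMod ℓ 1 (f i))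
    (hc : ∀ i < ℓ, subst hbar (f i) = X * c i) (hc0 : ∀ i < ℓ, constantCoeff (c i) ≠ 0)
    (hcu : ∀ i < ℓ, c i * u i = hbar) (hc_prod : ∏ i ∈ range ℓ, c i = 1) (n k : ℕ) :
    ∑ j ∈ range (n + 1), mrEntry ℓ (subst hbar g)⁻¹ u n j * mrEntry ℓ g f j k =
      if n = k then 1 else 0 := by
  refine sum_mrEntry_mul_mrEntry hℓ hbar0 (a := fun i => (c i)⁻¹) (fun i hi => ?_) ?_ hg hf
    (PowerSeries.inv_mul_cancel _ ?_) (fun i hi => ?_) n k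
  · rw [eq_mul_inv_iff_mul_eq (hc0 i hi), mul_comm, hcu i hi]
  · calc ∏ i ∈ range ℓ, (c i)⁻¹ = (∏ i ∈ range ℓ, (c i)⁻¹) * ∏ i ∈ range ℓ, c i := by
          rw [hc_prod, mul_one]
      _ = 1 := by
          rw [← prod_mul_distrib]
          exact prod_eq_one fun i hi => PowerSeries.inv_mul_cancel _ (hc0 i (mem_range.1 hi))
  · rwa [constantCoeff_subst_of_constantCoeff_eq_zero hbar0]
  · rw [hc i hi, mul_left_comm, PowerSeries.inv_mul_cancel _ (hc0 i hi), mul_one]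

end Inverse

end PowerSeries

theorem stmt2_general {K : Type*} [Field K] (ℓ : ℕ) (hℓ : 2 ≤ ℓ)
    (g : K⟦X⟧) (f : ℕ → K⟦X⟧)
    (hg : ∀ n, ¬ (ℓ ∣ n) → coeff n g = 0) (hg0 : constantCoeff g ≠ 0)
    (hf : ∀ i < ℓ, ∀ n, n % ℓ ≠ 1 → coeff n (f i) = 0)
    (hf1 : ∀ i < ℓ, coeff 1 (f i) ≠ 0)
    (h : K⟦X⟧) (hhs : ∀ n, n % ℓ ≠ 1 → coeff n h = 0) (hh1 : coeff 1 h ≠ 0)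
    (hhl : h ^ ℓ = ∏ i ∈ Finset.range ℓ, f i)
    (hbar : K⟦X⟧) (hbar0 : constantCoeff hbar = 0)
    (hinv1 : psComp h hbar = X) (hinv2 : psComp hbar h = X)
    (u : ℕ → K⟦X⟧) (hu : ∀ i < ℓ, u i * psComp (f i) hbar = X * hbar)
    (d e : ℕ → ℕ → K)
    (hd : ∀ n k, d n k = mrEntry ℓ g f n k)
    (he : ∀ n k, e n k = mrEntry ℓ (psComp g hbar)⁻¹ u n k) :
    constantCoeff (psComp g hbar) ≠ 0 ∧
    (∀ n, ¬ (ℓ ∣ n) → coeff n (psComp g hbar)⁻¹ = 0) ∧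
    constantCoeff (psComp g hbar)⁻¹ ≠ 0 ∧
    (∀ i < ℓ, ∀ n, n % ℓ ≠ 1 → coeff n (u i) = 0) ∧
    (∀ i < ℓ, coeff 1 (u i) ≠ 0) ∧
    (∀ n k, ∑ j ∈ Finset.range (n + 1), d n j * e j k = if n = k then 1 else 0) ∧
    (∀ n k, ∑ j ∈ Finset.range (n + 1), e n j * d j k = if n = k then 1 else 0) := by
  rw [← supportedMod_one_iff hℓ] at hhs
  rw [← supportedMod_zero_iff] at hg
  replace hf : ∀ i < ℓ, SupportedMod ℓ 1 (f i) := fun i hi => (supportedMod_one_iff hℓ).2 (hf i hi)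
  have hh0 : constantCoeff h = 0 := hhs.constantCoeff_eq_zero (by omega)
  simp only [psComp_eq_subst hbar0] at hinv1 hu he ⊢
  rw [psComp_eq_subst hh0] at hinv2
  simp only [← supportedMod_zero_iff, ← supportedMod_one_iff hℓ, hd, he]
  have hbar1 : coeff 1 hbar * coeff 1 h = 1 := by
    simpa [coeff_one_subst hh0] using congrArg (coeff 1) hinv2
  have hbar_supp : SupportedMod ℓ 1 hbar := .of_subst_eq_X hhs hh0 hh1 hinv2
  have hG0 : constantCoeff (subst hbar g) ≠ 0 := by
    rwa [constantCoeff_subst_of_constantCoeff_eq_zero hbar0]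
  obtain ⟨c, hc, hc0, hcu, hc_prod⟩ := exists_subst_eq_X_mul hbar0
    (left_ne_zero_of_mul_eq_one hbar1) hinv1 hhl
    (fun i hi => (hf i hi).constantCoeff_eq_zero (by omega)) hf1 hu
  have hu_eq : ∀ i < ℓ, u i = hbar * (c i)⁻¹ := fun i hi => by
    rw [eq_mul_inv_iff_mul_eq (hc0 i hi), mul_comm, hcu i hi]
  have hu_supp : ∀ i < ℓ, SupportedMod ℓ 1 (u i) := fun i hi =>
    hu_eq i hi ▸ hbar_supp.mul (.inv (.of_X_mul (hc i hi ▸ (hf i hi).subst hbar_supp hbar0)))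
  refine ⟨hG0, (hg.subst hbar_supp hbar0).inv, by simpa using hG0, hu_supp, fun i hi => ?_,
    sum_mrEntry_mul_mrEntry_subst_inv (by omega) hh0 hbar0 hinv2 hg0 hg hbar_supp hu_supp hc hcu
      hc_prod,
    sum_mrEntry_subst_inv_mul_mrEntry (by omega) hbar0 hg0 hg hf hc hc0 hcu hc_prod⟩
  rw [hu_eq i hi, coeff_one_mul, constantCoeff_inv, hbar0]
  simpa using ⟨left_ne_zero_of_mul_eq_one hbar1, hc0 i hi⟩

/-- The inverse of a multiple Riordan array. -/
theorem stmt2 {K : Type*} [Field K] [CharZero K] (ℓ : ℕ) (hℓ : 2 ≤ ℓ)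
    (g : K⟦X⟧) (f : ℕ → K⟦X⟧)
    (hg : ∀ n, ¬ (ℓ ∣ n) → coeff n g = 0) (hg0 : constantCoeff g ≠ 0)
    (hf : ∀ i < ℓ, ∀ n, n % ℓ ≠ 1 → coeff n (f i) = 0)
    (hf1 : ∀ i < ℓ, coeff 1 (f i) ≠ 0)
    (h : K⟦X⟧) (hhs : ∀ n, n % ℓ ≠ 1 → coeff n h = 0) (hh1 : coeff 1 h ≠ 0)
    (hhl : h ^ ℓ = ∏ i ∈ Finset.range ℓ, f i)
    (hbar : K⟦X⟧) (hbar0 : constantCoeff hbar = 0)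
    (hinv1 : psComp h hbar = X) (hinv2 : psComp hbar h = X)
    (u : ℕ → K⟦X⟧) (hu : ∀ i < ℓ, u i * psComp (f i) hbar = X * hbar)
    (d e : ℕ → ℕ → K)
    (hd : ∀ n k, d n k = mrEntry ℓ g f n k)
    (he : ∀ n k, e n k = mrEntry ℓ (psComp g hbar)⁻¹ u n k) :
    constantCoeff (psComp g hbar) ≠ 0 ∧
    (∀ n, ¬ (ℓ ∣ n) → coeff n (psComp g hbar)⁻¹ = 0) ∧
    constantCoeff (psComp g hbar)⁻¹ ≠ 0 ∧
    (∀ i < ℓ, ∀ n, n % ℓ ≠ 1 → coeff n (u i) = 0) ∧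
    (∀ i < ℓ, coeff 1 (u i) ≠ 0) ∧
    (∀ n k, ∑ j ∈ Finset.range (n + 1), d n j * e j k = if n = k then 1 else 0) ∧
    (∀ n k, ∑ j ∈ Finset.range (n + 1), e n j * d j k = if n = k then 1 else 0) :=
  stmt2_general ℓ hℓ g f hg hg0 hf hf1 h hhs hh1 hhl hbar hbar0 hinv1 hinv2 u hu d e hd he
end

section
/- Let (d_{n,k}) = (g; f_1,…,f_ℓ) be a multiple Riordan array. Then for every n ≥ 0 the n-th row sum satisfies Σ_{k=0}^{n} d_{n,k} = [t^n]( g·(1 + f_1 + f_1 f_2 + ⋯ + f_1 f_2 ⋯ f_{ℓ−1})·(1 − f_1 f_2 ⋯ f_ℓ)^{−1} ), where 1 − f_1⋯f_ℓ is invertible in K[[t]] since its constant term is 1. -/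
open PowerSeries Finset

/-!
Column `k` of the array is divisible by `X ^ k`, so the `n`-th row sum may be extended to the
columns `k < ℓ (n + 1)`. Writing `k = q ℓ + m`, that sum is the `n`-th coefficient of
`g · (∑_{m < ℓ} f_0 ⋯ f_{m-1}) · ∑_{q ≤ n} P ^ q` with `P = f_0 ⋯ f_{ℓ-1}`, and since `X ∣ P`
the truncated geometric series agrees with `(1 - P)⁻¹` modulo `X ^ (n + 1)`.
-/

theorem Finset.sum_range_mul_div_mod {M : Type*} [AddCommMonoid M] (F : ℕ → ℕ → M)
    {ℓ : ℕ} (hℓ : 0 < ℓ) (N : ℕ) :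
    ∑ k ∈ range (ℓ * N), F (k / ℓ) (k % ℓ) = ∑ q ∈ range N, ∑ m ∈ range ℓ, F q m := by
  induction N with
  | zero => simp
  | succ N ih =>
    rw [mul_add_one, sum_range_add, ih, sum_range_succ]
    refine congrArg _ (sum_congr rfl fun m hm => ?_)
    have hm : m < ℓ := mem_range.mp hm
    rw [Nat.mul_add_div hℓ, Nat.div_eq_of_lt hm, add_zero, Nat.mul_add_mod,
      Nat.mod_eq_of_lt hm]

namespace PowerSeries

variable {R : Type*} [CommRing R]

theorem coeff_eq_of_X_pow_dvd_sub {A B : R⟦X⟧} {n : ℕ} (h : X ^ (n + 1) ∣ A - B) :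
    coeff n A = coeff n B :=
  sub_eq_zero.mp (by rw [← map_sub]; exact X_pow_dvd_iff.mp h n (lt_add_one n))

theorem sum_range_coeff_eq_of_X_pow_dvd {c : ℕ → R⟦X⟧} (hc : ∀ k, X ^ k ∣ c k) {n N : ℕ}
    (hN : n + 1 ≤ N) :
    ∑ k ∈ range (n + 1), coeff n (c k) = ∑ k ∈ range N, coeff n (c k) :=
  sum_subset (range_subset_range.mpr hN) fun k _ hk =>
    X_pow_dvd_iff.mp (hc k) n (by simpa using hk)

theorem X_pow_dvd_prod_range {f : ℕ → R⟦X⟧} {m : ℕ} (hf : ∀ i < m, X ∣ f i) :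
    X ^ m ∣ ∏ i ∈ range m, f i := by
  simpa using prod_dvd_prod_of_dvd (fun _ => X) f fun i hi => hf i (mem_range.mp hi)

/-- The `k`-th column of a multiple Riordan array is divisible by `X ^ k`. -/
theorem X_pow_dvd_mul_prod_range_mod_mul_pow_div {f : ℕ → R⟦X⟧} {ℓ : ℕ} (hℓ : 0 < ℓ)
    (hf : ∀ i < ℓ, X ∣ f i) (g : R⟦X⟧) (k : ℕ) :
    X ^ k ∣ g * (∏ i ∈ range (k % ℓ), f i) * (∏ i ∈ range ℓ, f i) ^ (k / ℓ) := by
  have hmod : ∀ i < k % ℓ, X ∣ f i := fun i hi => hf i (hi.trans (Nat.mod_lt k hℓ))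
  have hk : (X : R⟦X⟧) ^ k = X ^ (k % ℓ) * (X ^ ℓ) ^ (k / ℓ) := by
    rw [← pow_mul, ← pow_add, Nat.mod_add_div]
  rw [mul_assoc, hk]
  exact dvd_mul_of_dvd_right
    (mul_dvd_mul (X_pow_dvd_prod_range hmod) (pow_dvd_pow_of_dvd (X_pow_dvd_prod_range hf) _)) g

theorem coeff_mul_inv_one_sub {K : Type*} [Field K] {P : K⟦X⟧} (hP : X ∣ P) (h : K⟦X⟧)
    (n : ℕ) : coeff n (h * (1 - P)⁻¹) = coeff n (h * ∑ q ∈ range (n + 1), P ^ q) := by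
  have hunit : constantCoeff (1 - P) ≠ 0 := by simp [X_dvd_iff.mp hP]
  apply coeff_eq_of_X_pow_dvd_sub
  have : h * (1 - P)⁻¹ - h * ∑ q ∈ range (n + 1), P ^ q = h * (1 - P)⁻¹ * P ^ (n + 1) := by
    have hinv : (1 - P)⁻¹ * (1 - P) = 1 := PowerSeries.inv_mul_cancel _ hunit
    linear_combination (-(h * (1 - P)⁻¹)) * mul_neg_geom_sum P (n + 1) +
      (h * ∑ q ∈ range (n + 1), P ^ q) * hinv
  rw [this]
  exact dvd_mul_of_dvd_right (pow_dvd_pow_of_dvd hP _) _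

end PowerSeries

theorem stmt3_general {K : Type*} [Field K] (ℓ : ℕ) (hℓ : 2 ≤ ℓ)
    (g : K⟦X⟧) (f : ℕ → K⟦X⟧)
    (hf : ∀ i < ℓ, ∀ n, n % ℓ ≠ 1 → coeff n (f i) = 0)
    (d : ℕ → ℕ → K) (hd : ∀ n k, d n k = mrEntry ℓ g f n k) :
    IsUnit (1 - ∏ i ∈ Finset.range ℓ, f i) ∧
    ∀ n, ∑ k ∈ Finset.range (n + 1), d n k
      = coeff n (g * (∑ m ∈ Finset.range ℓ, ∏ i ∈ Finset.range m, f i) *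
          (1 - ∏ i ∈ Finset.range ℓ, f i)⁻¹) := by
  set P := ∏ i ∈ range ℓ, f i
  have hX : ∀ i < ℓ, X ∣ f i := fun i hi =>
    X_dvd_iff.mpr (by simpa using hf i hi 0 (by simp))
  have hP : X ∣ P := (dvd_pow_self X (by omega)).trans (X_pow_dvd_prod_range hX)
  refine ⟨by simp [isUnit_iff_constantCoeff, X_dvd_iff.mp hP], fun n => ?_⟩
  calc ∑ k ∈ range (n + 1), d n k
      = ∑ k ∈ range (ℓ * (n + 1)), coeff n (g * (∏ i ∈ range (k % ℓ), f i) * P ^ (k / ℓ)) := by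
        simp only [hd, mrEntry]
        exact sum_range_coeff_eq_of_X_pow_dvd
          (X_pow_dvd_mul_prod_range_mod_mul_pow_div (by omega) hX g)
          (Nat.le_mul_of_pos_left _ (by omega))
    _ = ∑ q ∈ range (n + 1), ∑ m ∈ range ℓ, coeff n (g * (∏ i ∈ range m, f i) * P ^ q) :=
        sum_range_mul_div_mod (fun q m => coeff n (g * (∏ i ∈ range m, f i) * P ^ q)) (by omega) _
    _ = coeff n (g * (∑ m ∈ range ℓ, ∏ i ∈ range m, f i) * ∑ q ∈ range (n + 1), P ^ q) := by
        simp only [mul_sum, sum_mul, map_sum]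
    _ = _ := (coeff_mul_inv_one_sub hP _ n).symm

/-- The generating function of the row sums of a multiple Riordan array. -/
theorem stmt3 {K : Type*} [Field K] [CharZero K] (ℓ : ℕ) (hℓ : 2 ≤ ℓ)
    (g : K⟦X⟧) (f : ℕ → K⟦X⟧)
    (hg : ∀ n, ¬ (ℓ ∣ n) → coeff n g = 0) (hg0 : constantCoeff g ≠ 0)
    (hf : ∀ i < ℓ, ∀ n, n % ℓ ≠ 1 → coeff n (f i) = 0)
    (hf1 : ∀ i < ℓ, coeff 1 (f i) ≠ 0)
    (d : ℕ → ℕ → K) (hd : ∀ n k, d n k = mrEntry ℓ g f n k) :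
    IsUnit (1 - ∏ i ∈ Finset.range ℓ, f i) ∧
    ∀ n, ∑ k ∈ Finset.range (n + 1), d n k
      = coeff n (g * (∑ m ∈ Finset.range ℓ, ∏ i ∈ Finset.range m, f i) *
          (1 - ∏ i ∈ Finset.range ℓ, f i)⁻¹) :=
  stmt3_general ℓ hℓ g f hf d hd
end

section
/- Let (d_{n,k}) = (g; f_1,…,f_ℓ) be a multiple Riordan array and h an ℓ-th root of f_1⋯f_ℓ. For each m ∈ {0, 1, …, ℓ−1} there exists a unique Z_m = Σ_{j≥0} z_{m,j} t^{ℓj} ∈ K[[t]] supported on exponents divisible by ℓ such that g·f_1⋯f_m·(1 − t^ℓ·Z_m(h)) = g_0 f_{1,0}⋯f_{m,0}·t^m (empty products equal to 1, so for m = 0 the condition reads g·(1 − t^ℓ·Z_0(h)) = g_0). For these Z_m-sequences, one has d_{n,m} = Σ_{j=0}^{n} z_{m,j} d_{n−ℓ, m+jℓ} for all n ≥ ℓ and each m ∈ {0,…,ℓ−1} (terms whose column index exceeds the row index are zero). -/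
/-!
Write `h = X * v` and `g * f_1 ⋯ f_m = X ^ m * H`, where `v` and `H` are power series in `X ^ ℓ`
(the image of `expand ℓ`) with nonzero constant terms. Substitution `Z ↦ Z(X * v)` is a bijection
of `K⟦X⟧`, because its coefficient matrix is triangular with diagonal `v(0) ^ n`, and it commutes
with the projection onto exponents divisible by `ℓ`. The defining equation of `Z_m` says
`Z_m(h) = (H - H(0)) / (X ^ ℓ * H)`, a series in `X ^ ℓ`, which gives existence and uniqueness.
The recurrence is the coefficient of `X ^ n` in `G = c * X ^ m + X ^ ℓ * G * Z(h)`, after expanding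
`Z(h) = ∑ z_j h ^ (ℓ j)` and `h ^ (ℓ j) = (f_1 ⋯ f_ℓ) ^ j`.
-/

open PowerSeries Finset

lemma Finset.sum_range_mul_of_not_dvd {M : Type*} [AddCommMonoid M] {ℓ : ℕ} (hℓ : 0 < ℓ)
    {f : ℕ → M} (hf : ∀ k, ¬ ℓ ∣ k → f k = 0) (N : ℕ) :
    ∑ k ∈ range (ℓ * N), f k = ∑ j ∈ range N, f (ℓ * j) := by
  induction N with
  | zero => simp
  | succ N ih =>
    rw [Nat.mul_succ, sum_range_add, ih, sum_range_succ,
      sum_eq_single_of_mem (s := range ℓ) 0 (mem_range.mpr hℓ), add_zero]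
    intro r hr hr0
    exact hf _ ((Nat.dvd_add_right (dvd_mul_right ℓ N)).not.mpr
      (Nat.not_dvd_of_pos_of_lt (Nat.pos_of_ne_zero hr0) (mem_range.mp hr)))

namespace PowerSeries

section Substitution

variable {R : Type*} [CommRing R]

lemma coeff_X_mul_pow_of_lt (v : R⟦X⟧) {s k : ℕ} (hs : s < k) : coeff s ((X * v) ^ k) = 0 := by
  rw [mul_pow, coeff_X_pow_mul', if_neg (by omega)]

lemma coeff_X_mul_pow_self (v : R⟦X⟧) (k : ℕ) :
    coeff k ((X * v) ^ k) = constantCoeff v ^ k := by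
  rw [mul_pow, coeff_X_pow_mul', if_pos le_rfl, Nat.sub_self, coeff_zero_eq_constantCoeff,
    map_pow]

lemma psComp_sub (A B u : R⟦X⟧) : psComp (A - B) u = psComp A u - psComp B u := by
  ext n
  simp [psComp, sub_mul, sum_sub_distrib]

lemma coeff_psComp_X_mul (Z v : R⟦X⟧) (n : ℕ) :
    coeff n (psComp Z (X * v)) =
      coeff n Z * constantCoeff v ^ n + ∑ k ∈ range n, coeff k Z * coeff n ((X * v) ^ k) := by
  rw [psComp, coeff_mk, sum_range_succ, coeff_X_mul_pow_self, add_comm]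

lemma X_pow_dvd_psComp_sub_sum (Z v : R⟦X⟧) (M : ℕ) :
    X ^ M ∣ psComp Z (X * v) - ∑ k ∈ range M, C (coeff k Z) * (X * v) ^ k := by
  refine X_pow_dvd_iff.mpr fun s hs => ?_
  rw [map_sub, sub_eq_zero, psComp, coeff_mk, map_sum]
  simp_rw [coeff_C_mul]
  refine sum_subset (fun k hk => by simp only [mem_range] at hk ⊢; omega) fun k _ hks => ?_
  rw [coeff_X_mul_pow_of_lt v (by simpa using hks), mul_zero]

lemma coeff_mul_psComp (G Z v : R⟦X⟧) {N M : ℕ} (hNM : N < M) :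
    coeff N (G * psComp Z (X * v)) = ∑ k ∈ range M, coeff k Z * coeff N (G * (X * v) ^ k) := by
  obtain ⟨E, hE⟩ := X_pow_dvd_psComp_sub_sum Z v M
  rw [sub_eq_iff_eq_add.mp hE, mul_add, map_add, mul_left_comm, coeff_X_pow_mul',
    if_neg (by omega), zero_add, mul_sum, map_sum]
  exact sum_congr rfl fun k _ => by rw [mul_left_comm, coeff_C_mul]

end Substitution

section Inversion

variable {K : Type*} [Field K]

-- The coefficients of the `Z` with `psComp Z (X * v) = W`, solving the triangular system in order.
noncomputable def psCompInvCoeff (v W : K⟦X⟧) : ℕ → K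
  | n => (coeff n W - ∑ k ∈ (range n).attach,
      psCompInvCoeff v W k * coeff n ((X * v) ^ k.1)) / constantCoeff v ^ n
  decreasing_by exact mem_range.mp k.2

lemma psComp_X_mul_bijective {v : K⟦X⟧} (hv : constantCoeff v ≠ 0) :
    Function.Bijective fun Z : K⟦X⟧ => psComp Z (X * v) := by
  refine ⟨fun A B hAB => ?_, fun W => ⟨mk (psCompInvCoeff v W), ?_⟩⟩
  · suffices ∀ Z : K⟦X⟧, psComp Z (X * v) = 0 → Z = 0 from
      sub_eq_zero.mp (this _ (by rw [psComp_sub]; exact sub_eq_zero.mpr hAB))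
    intro Z hZ
    ext n
    induction n using Nat.strong_induction_on with
    | _ n ih =>
      have hn := congrArg (coeff n) hZ
      rw [coeff_psComp_X_mul, sum_eq_zero fun k hk => by
        rw [ih k (mem_range.mp hk), map_zero, zero_mul], add_zero, map_zero] at hn
      rw [map_zero]
      exact (mul_eq_zero.mp hn).resolve_right (pow_ne_zero _ hv)
  · ext n
    rw [coeff_psComp_X_mul, coeff_mk, psCompInvCoeff, div_mul_cancel₀ _ (pow_ne_zero _ hv),
      ← sum_attach (range n)]
    simp only [coeff_mk, sub_add_cancel]

end Inversion

section Periodic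

variable {R : Type*} [CommRing R]

noncomputable def dvdPart (ℓ : ℕ) (F : R⟦X⟧) : R⟦X⟧ :=
  mk fun n => if ℓ ∣ n then coeff n F else 0

variable {ℓ : ℕ} (hℓ : ℓ ≠ 0)

lemma mem_range_expand_iff {F : R⟦X⟧} :
    F ∈ (expand ℓ hℓ).range ↔ ∀ n, ¬ ℓ ∣ n → coeff n F = 0 := by
  refine ⟨?_, fun hF => (AlgHom.mem_range _).mpr ⟨mk fun n => coeff (ℓ * n) F, ?_⟩⟩
  · rintro ⟨F₀, rfl⟩ n hn
    exact coeff_expand_of_not_dvd _ _ _ hn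
  · ext n
    rw [coeff_expand]
    split_ifs with hn
    · obtain ⟨q, rfl⟩ := hn
      rw [coeff_mk, Nat.mul_div_cancel_left q (Nat.pos_of_ne_zero hℓ)]
    · exact (hF n hn).symm

lemma coeff_X_pow_mul_eq_zero_of_mem_range_expand {V : R⟦X⟧} (hV : V ∈ (expand ℓ hℓ).range)
    {k n : ℕ} (hkn : n % ℓ ≠ k % ℓ) : coeff n (X ^ k * V) = 0 := by
  rw [coeff_X_pow_mul']
  split_ifs with hk
  · exact (mem_range_expand_iff hℓ).mp hV _ fun hdvd => hkn ((Nat.modEq_iff_dvd' hk).mpr hdvd).symm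
  · rfl

lemma exists_eq_X_mul_mem_range_expand {F : R⟦X⟧} (hF : ∀ n, n % ℓ ≠ 1 → coeff n F = 0) :
    ∃ u ∈ (expand ℓ hℓ).range, F = X * u := by
  obtain ⟨u, rfl⟩ := X_dvd_iff.mpr (by simpa using hF 0 (by simp))
  refine ⟨u, (mem_range_expand_iff hℓ).mpr fun n hn => ?_, rfl⟩
  rw [← coeff_succ_X_mul]
  refine hF _ fun h1 => hn ⟨(n + 1) / ℓ, ?_⟩
  have := Nat.div_add_mod (n + 1) ℓ
  rw [h1] at this
  exact (Nat.add_right_cancel this).symm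

lemma dvdPart_mem (F : R⟦X⟧) : dvdPart ℓ F ∈ (expand ℓ hℓ).range :=
  (mem_range_expand_iff hℓ).mpr fun n hn => by rw [dvdPart, coeff_mk, if_neg hn]

lemma dvdPart_eq_self {F : R⟦X⟧} (hF : F ∈ (expand ℓ hℓ).range) : dvdPart ℓ F = F := by
  ext n
  rw [dvdPart, coeff_mk]
  split_ifs with hn
  · rfl
  · exact ((mem_range_expand_iff hℓ).mp hF n hn).symm

lemma dvdPart_mul (A : R⟦X⟧) {B : R⟦X⟧} (hB : B ∈ (expand ℓ hℓ).range) :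
    dvdPart ℓ (A * B) = dvdPart ℓ A * B := by
  ext n
  have hterm : ∀ p ∈ antidiagonal n, coeff p.1 (dvdPart ℓ A) * coeff p.2 B =
      if ℓ ∣ n then coeff p.1 A * coeff p.2 B else 0 := by
    intro p hp
    rw [dvdPart, coeff_mk]
    by_cases hp2 : ℓ ∣ p.2
    · simp only [← mem_antidiagonal.mp hp, Nat.dvd_add_left hp2]
      split_ifs <;> simp
    · rw [(mem_range_expand_iff hℓ).mp hB _ hp2]
      simp
  rw [coeff_mul, sum_congr rfl hterm, dvdPart, coeff_mk, coeff_mul]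
  split_ifs <;> simp

lemma dvdPart_psComp (Z : R⟦X⟧) {v : R⟦X⟧} (hv : v ∈ (expand ℓ hℓ).range) :
    dvdPart ℓ (psComp Z (X * v)) = psComp (dvdPart ℓ Z) (X * v) := by
  ext n
  have hterm : ∀ k, coeff k (dvdPart ℓ Z) * coeff n ((X * v) ^ k) =
      if ℓ ∣ n then coeff k Z * coeff n ((X * v) ^ k) else 0 := by
    intro k
    have hzero (hkn : n % ℓ ≠ k % ℓ) : coeff n ((X * v) ^ k) = 0 := by
      rw [mul_pow]
      exact coeff_X_pow_mul_eq_zero_of_mem_range_expand hℓ (pow_mem hv k) hkn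
    simp only [dvdPart, coeff_mk, Nat.dvd_iff_mod_eq_zero]
    by_cases hkn : n % ℓ = k % ℓ
    · simp only [hkn]
      split_ifs <;> simp
    · rw [hzero hkn]
      simp
  simp only [psComp, coeff_mk, hterm]
  rw [dvdPart, coeff_mk, coeff_mk]
  split_ifs <;> simp

end Periodic

section PeriodicSolution

variable {K : Type*} [Field K] {ℓ : ℕ} (hℓ : ℓ ≠ 0)

lemma exists_mem_range_expand_psComp_eq {v : K⟦X⟧} (hv : v ∈ (expand ℓ hℓ).range)
    (hv0 : constantCoeff v ≠ 0) {W : K⟦X⟧} (hW : W ∈ (expand ℓ hℓ).range) :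
    ∃ Z ∈ (expand ℓ hℓ).range, psComp Z (X * v) = W := by
  obtain ⟨Z, hZ : psComp Z (X * v) = W⟩ := (psComp_X_mul_bijective hv0).2 W
  exact ⟨dvdPart ℓ Z, dvdPart_mem hℓ Z, by rw [← dvdPart_psComp hℓ Z hv, hZ, dvdPart_eq_self hℓ hW]⟩

lemma exists_mem_range_expand_mul_one_sub_X_pow_mul {H : K⟦X⟧} (hH : H ∈ (expand ℓ hℓ).range)
    (hH0 : constantCoeff H ≠ 0) :
    ∃ W ∈ (expand ℓ hℓ).range, H * (1 - X ^ ℓ * W) = C (constantCoeff H) := by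
  set c := constantCoeff H
  have hHc : H - C c ∈ (expand ℓ hℓ).range := sub_mem hH ⟨C c, expand_C ℓ hℓ c⟩
  obtain ⟨V, hV⟩ : X ^ ℓ ∣ H - C c := X_pow_dvd_iff.mpr fun s hs => by
    rcases Nat.eq_zero_or_pos s with rfl | hs0
    · simp [c]
    · exact (mem_range_expand_iff hℓ).mp hHc s (Nat.not_dvd_of_pos_of_lt hs0 hs)
  have hXH : X ^ ℓ * H ∈ (expand ℓ hℓ).range := mul_mem ⟨X, expand_X ℓ hℓ⟩ hH
  -- `V * H⁻¹` is a solution, and projecting it onto exponents divisible by `ℓ` keeps it one.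
  refine ⟨dvdPart ℓ (V * H⁻¹), dvdPart_mem hℓ _, ?_⟩
  have key : dvdPart ℓ (V * H⁻¹) * (X ^ ℓ * H) = H - C c := by
    rw [← dvdPart_mul hℓ _ hXH, show V * H⁻¹ * (X ^ ℓ * H) = X ^ ℓ * V * (H * H⁻¹) by ring,
      PowerSeries.mul_inv_cancel H hH0, mul_one, ← hV, dvdPart_eq_self hℓ hHc]
  linear_combination -key

lemma existsUnique_mem_range_expand_X_pow_mul_one_sub_psComp {H v : K⟦X⟧}
    (hH : H ∈ (expand ℓ hℓ).range) (hH0 : constantCoeff H ≠ 0)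
    (hv : v ∈ (expand ℓ hℓ).range) (hv0 : constantCoeff v ≠ 0) (m : ℕ) :
    ∃! Z, Z ∈ (expand ℓ hℓ).range ∧
      X ^ m * H * (1 - X ^ ℓ * psComp Z (X * v)) = C (constantCoeff H) * X ^ m := by
  obtain ⟨W, hW, hHW⟩ := exists_mem_range_expand_mul_one_sub_X_pow_mul hℓ hH hH0
  obtain ⟨Z, hZ, hZW⟩ := exists_mem_range_expand_psComp_eq hℓ hv hv0 hW
  refine ⟨Z, ⟨hZ, by rw [hZW, mul_assoc, hHW, mul_comm]⟩, fun Z' ⟨_, hZ'⟩ => ?_⟩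
  have hXmH : X ^ m * H ≠ 0 :=
    mul_ne_zero (pow_ne_zero _ X_ne_zero) fun h0 => hH0 (by rw [h0, map_zero])
  have hXW : X ^ ℓ * psComp Z' (X * v) = X ^ ℓ * W := by
    have := mul_left_cancel₀ hXmH (hZ'.trans (by rw [mul_assoc, hHW, mul_comm]))
    linear_combination -this
  exact (psComp_X_mul_bijective hv0).1
    ((mul_left_cancel₀ (pow_ne_zero _ X_ne_zero) hXW).trans hZW.symm)

lemma coeff_eq_sum_of_mul_one_sub_X_pow_mul_psComp {G Z v : K⟦X⟧} {c : K} {m n : ℕ}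
    (hZ : Z ∈ (expand ℓ hℓ).range) (hm : m < ℓ) (hn : ℓ ≤ n)
    (hG : G * (1 - X ^ ℓ * psComp Z (X * v)) = C c * X ^ m) :
    coeff n G =
      ∑ j ∈ range (n + 1), coeff (ℓ * j) Z * coeff (n - ℓ) (G * (X * v) ^ (ℓ * j)) := by
  have hG' : G = C c * X ^ m + X ^ ℓ * (G * psComp Z (X * v)) := by linear_combination hG
  calc coeff n G = coeff n (C c * X ^ m + X ^ ℓ * (G * psComp Z (X * v))) := congrArg _ hG'
    _ = coeff (n - ℓ) (G * psComp Z (X * v)) := by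
        rw [map_add, coeff_C_mul_X_pow, if_neg (by omega), zero_add, coeff_X_pow_mul',
          if_pos hn]
    _ = ∑ k ∈ range (ℓ * (n + 1)), coeff k Z * coeff (n - ℓ) (G * (X * v) ^ k) :=
        coeff_mul_psComp G Z v
          (by have := Nat.le_mul_of_pos_left (n + 1) (show 0 < ℓ by omega); omega)
    _ = _ := sum_range_mul_of_not_dvd (by omega)
        (fun k hk => by rw [(mem_range_expand_iff hℓ).mp hZ k hk, zero_mul]) _

end PeriodicSolution

end PowerSeries

lemma exists_mul_prod_eq_X_pow_mul {K : Type*} [CommRing K] {ℓ : ℕ} (hℓ : ℓ ≠ 0) {g : K⟦X⟧}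
    (hg : g ∈ (expand ℓ hℓ).range) {f : ℕ → K⟦X⟧} {m : ℕ}
    (hf : ∀ i < m, ∀ n, n % ℓ ≠ 1 → coeff n (f i) = 0) :
    ∃ H ∈ (expand ℓ hℓ).range, g * ∏ i ∈ range m, f i = X ^ m * H ∧
      constantCoeff H = constantCoeff g * ∏ i ∈ range m, coeff 1 (f i) := by
  induction m with
  | zero => exact ⟨g, hg, by simp, by simp⟩
  | succ m ih =>
    obtain ⟨H, hH, hgH, hH0⟩ := ih fun i hi => hf i (by omega)
    obtain ⟨u, hu, hfu⟩ := exists_eq_X_mul_mem_range_expand hℓ (hf m (by omega))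
    refine ⟨H * u, mul_mem hH hu, ?_, ?_⟩
    · rw [prod_range_succ, ← mul_assoc, hgH, hfu]
      ring
    · rw [prod_range_succ, map_mul, hH0, hfu]
      simp [mul_assoc]

lemma mrEntry_add_mul {K : Type*} [CommRing K] {ℓ m : ℕ} (hm : m < ℓ) (g : K⟦X⟧)
    (f : ℕ → K⟦X⟧) (n j : ℕ) :
    mrEntry ℓ g f n (m + j * ℓ) =
      coeff n (g * (∏ i ∈ range m, f i) * (∏ i ∈ range ℓ, f i) ^ j) := by
  rw [mrEntry, Nat.add_mul_mod_self_right, Nat.mod_eq_of_lt hm,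
    Nat.add_mul_div_right _ _ (by omega), Nat.div_eq_of_lt hm, zero_add]

theorem stmt11_general {K : Type*} [Field K] (ℓ : ℕ)
    (g : K⟦X⟧) (f : ℕ → K⟦X⟧)
    (hg : ∀ n, ¬ (ℓ ∣ n) → coeff n g = 0) (hg0 : constantCoeff g ≠ 0)
    (hf : ∀ i < ℓ, ∀ n, n % ℓ ≠ 1 → coeff n (f i) = 0)
    (hf1 : ∀ i < ℓ, coeff 1 (f i) ≠ 0)
    (h : K⟦X⟧) (hhs : ∀ n, n % ℓ ≠ 1 → coeff n h = 0) (hh1 : coeff 1 h ≠ 0)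
    (hhl : h ^ ℓ = ∏ i ∈ Finset.range ℓ, f i)
    (d : ℕ → ℕ → K) (hd : ∀ n k, d n k = mrEntry ℓ g f n k) :
    ∀ m < ℓ,
      (∃! Z : K⟦X⟧, (∀ n, ¬ (ℓ ∣ n) → coeff n Z = 0) ∧
        g * (∏ i ∈ Finset.range m, f i) * (1 - X ^ ℓ * psComp Z h)
          = C (constantCoeff g * ∏ i ∈ Finset.range m, coeff 1 (f i)) * X ^ m) ∧
      ∀ Z : K⟦X⟧, (∀ n, ¬ (ℓ ∣ n) → coeff n Z = 0) →
        g * (∏ i ∈ Finset.range m, f i) * (1 - X ^ ℓ * psComp Z h)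
          = C (constantCoeff g * ∏ i ∈ Finset.range m, coeff 1 (f i)) * X ^ m →
        ∀ n, ℓ ≤ n →
          d n m = ∑ j ∈ Finset.range (n + 1), coeff (ℓ * j) Z * d (n - ℓ) (m + j * ℓ) := by
  intro m hm
  have hℓ0 : ℓ ≠ 0 := Nat.ne_zero_of_lt hm
  obtain ⟨v, hv, rfl⟩ := exists_eq_X_mul_mem_range_expand hℓ0 hhs
  obtain ⟨H, hH, hGH, hH0⟩ := exists_mul_prod_eq_X_pow_mul hℓ0
    ((mem_range_expand_iff hℓ0).mpr hg) fun i hi => hf i (hi.trans hm)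
  refine ⟨?_, fun Z hZ hZG n hn => ?_⟩
  · have hc : constantCoeff H ≠ 0 := hH0 ▸ mul_ne_zero hg0
      (prod_ne_zero_iff.mpr fun i hi => hf1 i ((mem_range.mp hi).trans hm))
    simp only [← mem_range_expand_iff hℓ0, hGH, ← hH0]
    exact existsUnique_mem_range_expand_X_pow_mul_one_sub_psComp hℓ0 hH hc hv
      (by simpa using hh1) m
  · have hdn : d n m = coeff n (g * ∏ i ∈ range m, f i) := by
      simpa [hd] using mrEntry_add_mul hm g f n 0
    rw [hdn, coeff_eq_sum_of_mul_one_sub_X_pow_mul_psComp hℓ0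
      ((mem_range_expand_iff hℓ0).mpr hZ) hm hn hZG]
    refine sum_congr rfl fun j _ => ?_
    rw [hd, mrEntry_add_mul hm, ← hhl, ← pow_mul]

/-- Existence and uniqueness of the `Z_m`-sequences of a multiple Riordan array, and the
recurrences they induce. -/
theorem stmt11 {K : Type*} [Field K] [CharZero K] (ℓ : ℕ) (hℓ : 2 ≤ ℓ)
    (g : K⟦X⟧) (f : ℕ → K⟦X⟧)
    (hg : ∀ n, ¬ (ℓ ∣ n) → coeff n g = 0) (hg0 : constantCoeff g ≠ 0)
    (hf : ∀ i < ℓ, ∀ n, n % ℓ ≠ 1 → coeff n (f i) = 0)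
    (hf1 : ∀ i < ℓ, coeff 1 (f i) ≠ 0)
    (h : K⟦X⟧) (hhs : ∀ n, n % ℓ ≠ 1 → coeff n h = 0) (hh1 : coeff 1 h ≠ 0)
    (hhl : h ^ ℓ = ∏ i ∈ Finset.range ℓ, f i)
    (d : ℕ → ℕ → K) (hd : ∀ n k, d n k = mrEntry ℓ g f n k) :
    ∀ m < ℓ,
      (∃! Z : K⟦X⟧, (∀ n, ¬ (ℓ ∣ n) → coeff n Z = 0) ∧
        g * (∏ i ∈ Finset.range m, f i) * (1 - X ^ ℓ * psComp Z h)
          = C (constantCoeff g * ∏ i ∈ Finset.range m, coeff 1 (f i)) * X ^ m) ∧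
      ∀ Z : K⟦X⟧, (∀ n, ¬ (ℓ ∣ n) → coeff n Z = 0) →
        g * (∏ i ∈ Finset.range m, f i) * (1 - X ^ ℓ * psComp Z h)
          = C (constantCoeff g * ∏ i ∈ Finset.range m, coeff 1 (f i)) * X ^ m →
        ∀ n, ℓ ≤ n →
          d n m = ∑ j ∈ Finset.range (n + 1), coeff (ℓ * j) Z * d (n - ℓ) (m + j * ℓ) :=
  stmt11_general ℓ g f hg hg0 hf hf1 h hhs hh1 hhl d hd
end

section
/- For every m, n ∈ ℕ and every element x of a commutative ring R: Σ_{k=0}^{n} C(n,k)·k^m·x^{n−k} = Σ_{k=0}^{min(m,n)} S(m,k)·C(n,k)·k!·(x+1)^{n−k}. -/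
/-!
Expanding `k ^ m = ∑ⱼ S(m,j) · j! · C(k,j)` (falling factorials in the Stirling basis) and swapping
the two sums reduces the identity to `∑ₖ C(n,k) C(k,j) x^(n-k) = C(n,j) (x+1)^(n-j)`, which follows
from `C(n,k) C(k,j) = C(n,j) C(n-j,k-j)` and the binomial theorem. The terms with `j > n` vanish,
which truncates the sum at `min m n`.
-/

def stirling2 : ℕ → ℕ → ℕ
  | 0, 0 => 1
  | 0, _ + 1 => 0
  | _ + 1, 0 => 0
  | m + 1, k + 1 => (k + 1) * stirling2 m (k + 1) + stirling2 m k

open Finset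

theorem stirling2_eq_stirlingSecond : stirling2 = Nat.stirlingSecond := by
  funext m k
  induction m generalizing k with
  | zero => cases k <;> rfl
  | succ m ih => cases k <;> simp only [stirling2, Nat.stirlingSecond, ih]

namespace Nat

theorem mul_descFactorial (k j : ℕ) :
    k * k.descFactorial j = k.descFactorial (j + 1) + j * k.descFactorial j := by
  rw [descFactorial_succ, ← add_mul]
  rcases le_or_gt j k with hjk | hkj
  · rw [Nat.sub_add_cancel hjk]
  · simp [descFactorial_eq_zero_iff_lt.mpr hkj]

theorem pow_eq_sum_stirlingSecond_mul_descFactorial (m k : ℕ) :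
    k ^ m = ∑ j ∈ range (m + 1), stirlingSecond m j * k.descFactorial j := by
  induction m with
  | zero => simp
  | succ m ih =>
    have hshift : ∑ j ∈ range (m + 1), stirlingSecond m j * (j * k.descFactorial j) =
        ∑ j ∈ range (m + 1), (j + 1) * stirlingSecond m (j + 1) * k.descFactorial (j + 1) := by
      rw [sum_range_succ', sum_range_succ, stirlingSecond_eq_zero_of_lt (lt_add_one m)]
      simp only [zero_mul, mul_zero, add_zero]
      exact sum_congr rfl fun j _ => by ring
    calc k ^ (m + 1)
        = ∑ j ∈ range (m + 1), stirlingSecond m j * (k * k.descFactorial j) := by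
          rw [pow_succ, ih, sum_mul]
          exact sum_congr rfl fun j _ => by ring
      _ = ∑ j ∈ range (m + 1), stirlingSecond m j * k.descFactorial (j + 1) +
          ∑ j ∈ range (m + 1), stirlingSecond m j * (j * k.descFactorial j) := by
          simp only [mul_descFactorial, Nat.mul_add, sum_add_distrib]
      _ = ∑ j ∈ range (m + 2), stirlingSecond (m + 1) j * k.descFactorial j := by
          rw [hshift, ← sum_add_distrib, sum_range_succ' _ (m + 1)]
          simp only [stirlingSecond_succ_succ, stirlingSecond_succ_zero, zero_mul, add_zero]
          exact sum_congr rfl fun j _ => by ring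

end Nat

theorem pow_eq_sum_stirling2_mul_factorial_mul_choose (m k : ℕ) :
    k ^ m = ∑ j ∈ range (m + 1), stirling2 m j * j.factorial * k.choose j := by
  simp only [stirling2_eq_stirlingSecond, Nat.pow_eq_sum_stirlingSecond_mul_descFactorial m k,
    Nat.descFactorial_eq_factorial_mul_choose, Nat.mul_assoc]

theorem sum_choose_mul_choose_mul_pow {R : Type*} [CommSemiring R] (n j : ℕ) (x : R) :
    ∑ k ∈ range (n + 1), (n.choose k * k.choose j : R) * x ^ (n - k)
      = n.choose j * (x + 1) ^ (n - j) := by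
  rcases le_or_gt j n with hjn | hnj
  · have hsplit : n + 1 = j + (n - j + 1) := by omega
    rw [hsplit, sum_range_add, sum_eq_zero fun k hk => by
      simp [Nat.choose_eq_zero_of_lt (mem_range.mp hk)], zero_add, add_comm x, add_pow, mul_sum]
    refine sum_congr rfl fun i _ => ?_
    have hchoose : (n.choose (j + i) * (j + i).choose j : R) =
        n.choose j * (n - j).choose (j + i - j) := by
      rw [← Nat.cast_mul, ← Nat.cast_mul, Nat.choose_mul (by omega)]
    rw [hchoose, Nat.add_sub_cancel_left, show n - (j + i) = n - j - i by omega]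
    ring
  · have hzero : ∀ k ∈ range (n + 1), k.choose j = 0 := fun k hk =>
      Nat.choose_eq_zero_of_lt (by have := mem_range.mp hk; omega)
    rw [sum_eq_zero fun k hk => by simp [hzero k hk], Nat.choose_eq_zero_of_lt hnj, Nat.cast_zero,
      zero_mul]

/-- An umbral identity: `Σ_{k=0}^n C(n,k) k^m x^{n−k} = Σ_{k=0}^{m∧n} S(m,k) C(n,k) k! (x+1)^{n−k}`. -/
theorem stmt14 {R : Type*} [CommRing R] (m n : ℕ) (x : R) :
    ∑ k ∈ Finset.range (n + 1), (Nat.choose n k * k ^ m : ℕ) * x ^ (n - k)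
      = ∑ k ∈ Finset.range (min m n + 1),
          (stirling2 m k * Nat.choose n k * Nat.factorial k : ℕ) * (x + 1) ^ (n - k) := by
  have hvanish : ∀ j ∈ range (m + 1), j ∉ range (min m n + 1) →
      (stirling2 m j * n.choose j * j.factorial : R) * (x + 1) ^ (n - j) = 0 := fun j hm hj => by
    simp only [mem_range] at hm hj
    rw [Nat.choose_eq_zero_of_lt (by omega), Nat.cast_zero, mul_zero, zero_mul, zero_mul]
  calc ∑ k ∈ range (n + 1), ((n.choose k * k ^ m : ℕ) : R) * x ^ (n - k)
      = ∑ j ∈ range (m + 1), (stirling2 m j * j.factorial : R) *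
          ∑ k ∈ range (n + 1), (n.choose k * k.choose j : R) * x ^ (n - k) := by
        simp only [pow_eq_sum_stirling2_mul_factorial_mul_choose, mul_sum, Nat.cast_sum,
          Nat.cast_mul, sum_mul]
        rw [sum_comm]
        exact sum_congr rfl fun j _ => sum_congr rfl fun k _ => by ring
    _ = ∑ j ∈ range (m + 1), (stirling2 m j * n.choose j * j.factorial : R) * (x + 1) ^ (n - j) := by
        simp only [sum_choose_mul_choose_mul_pow]
        exact sum_congr rfl fun j _ => by ring
    _ = _ := by
        push_cast
        exact (sum_subset (range_subset_range.mpr (by omega)) hvanish).symm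
end
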